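/- arXiv:1202.4144 — 5 statements merged into one kernel-verified Lean document; each statement's English description precedes it below -/
import Mathlib

section
/- (Hintikka's Lemma for C1) Every C1 downward saturated set of signed formulas is satisfiable, i.e., there exists a C1-valuation v such that v(S A) = 1 for every signed formula S A in the set. -/
/-- Formulas of the paraconsistent logic C1, built from propositional atoms
with the connectives ¬, ∧, ∨, →. -/
inductive C1Formula : Type
  | atom : ℕ → C1Formula
  | neg  : C1Formula → C1Formula
  | and  : C1Formula → C1Formula → C1Formula
  | or   : C1Formula → C1Formula → C1Formula
  | imp  : C1Formula → C1Formula → C1Formula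
  deriving DecidableEq

namespace C1Formula

/-- The consistency connective: ∘A := ¬(A ∧ ¬A). -/
def cons (A : C1Formula) : C1Formula := neg (and A (neg A))

end C1Formula

/-- A C1 bivaluation: a function from formulas to {0,1} satisfying
da Costa's valuation clauses for C1. -/
structure C1Valuation : Type where
  v : C1Formula → Fin 2
  and_iff : ∀ A B : C1Formula, v (A.and B) = 1 ↔ (v A = 1 ∧ v B = 1)
  or_iff  : ∀ A B : C1Formula, v (A.or B) = 1 ↔ (v A = 1 ∨ v B = 1)
  imp_iff : ∀ A B : C1Formula, v (A.imp B) = 1 ↔ (v A = 0 ∨ v B = 1)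
  neg_val : ∀ A : C1Formula, v A.neg = 0 → v A = 1
  negneg_val : ∀ A : C1Formula, v A.neg.neg = 1 → v A = 1
  cons_val : ∀ A : C1Formula, v A.cons = 1 → (v A = 0 ∨ v A.neg = 0)
  cons_and : ∀ A B : C1Formula, v (A.and B).cons = 0 → (v A.cons = 0 ∨ v B.cons = 0)
  cons_or  : ∀ A B : C1Formula, v (A.or B).cons = 0 → (v A.cons = 0 ∨ v B.cons = 0)
  cons_imp : ∀ A B : C1Formula, v (A.imp B).cons = 0 → (v A.cons = 0 ∨ v B.cons = 0)

/-- Γ ⊨_{C1} B : every C1-valuation assigning 1 to all members of Γ assigns 1 to B. -/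
def C1Valid (Γ : Set C1Formula) (B : C1Formula) : Prop :=
  ∀ w : C1Valuation, (∀ A ∈ Γ, w.v A = 1) → w.v B = 1
/-- Signed formulas: T A or F A. -/
inductive SignedFormula : Type
  | T : C1Formula → SignedFormula
  | F : C1Formula → SignedFormula
  deriving DecidableEq

namespace SignedFormula

/-- The conjugate of a signed formula: the conjugate of T A is F A and vice versa. -/
def conj : SignedFormula → SignedFormula
  | T A => F A
  | F A => T A

end SignedFormula

open SignedFormula

/-- Extension of a C1-valuation to signed formulas: v(T A) = v(A), v(F A) = 1 - v(A). -/
def C1Valuation.sv (w : C1Valuation) : SignedFormula → Fin 2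
  | .T A => w.v A
  | .F A => 1 - w.v A

/-- A set of signed formulas is satisfiable if some C1-valuation assigns 1 to all its members. -/
def SatSet (S : Set SignedFormula) : Prop :=
  ∃ w : C1Valuation, ∀ sf ∈ S, w.sv sf = 1

/-- A set DS of signed formulas is downward saturated for the C1 KE system:
(i) no signed formula together with its conjugate;
(ii) closure under all linear C1 KE rules;
(iii) whenever the major premiss of a 2-premiss rule is in DS, the minor premiss
or its conjugate is in DS. -/
structure DownwardSaturated (DS : Set SignedFormula) : Prop where
  no_conj : ∀ sf ∈ DS, sf.conj ∉ DS
  -- (ii) 1-premiss rules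
  f_imp : ∀ A B : C1Formula, F (A.imp B) ∈ DS → T A ∈ DS ∧ F B ∈ DS
  t_and : ∀ A B : C1Formula, T (A.and B) ∈ DS → T A ∈ DS ∧ T B ∈ DS
  f_or  : ∀ A B : C1Formula, F (A.or B) ∈ DS → F A ∈ DS ∧ F B ∈ DS
  f_neg : ∀ A : C1Formula, F A.neg ∈ DS → T A ∈ DS
  t_negneg : ∀ A : C1Formula, T A.neg.neg ∈ DS → T A ∈ DS
  -- (ii) 2-premiss rules
  t_imp1 : ∀ A B : C1Formula, T (A.imp B) ∈ DS → T A ∈ DS → T B ∈ DS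
  t_imp2 : ∀ A B : C1Formula, T (A.imp B) ∈ DS → F B ∈ DS → F A ∈ DS
  f_and1 : ∀ A B : C1Formula, F (A.and B) ∈ DS → T A ∈ DS → F B ∈ DS
  f_and2 : ∀ A B : C1Formula, F (A.and B) ∈ DS → T B ∈ DS → F A ∈ DS
  t_or1  : ∀ A B : C1Formula, T (A.or B) ∈ DS → F A ∈ DS → T B ∈ DS
  t_or2  : ∀ A B : C1Formula, T (A.or B) ∈ DS → F B ∈ DS → T A ∈ DS
  t_neg  : ∀ A : C1Formula, T A.neg ∈ DS → T A.cons ∈ DS → F A ∈ DS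
  f_cons_and1 : ∀ A B : C1Formula, F (A.and B).cons ∈ DS → T A.cons ∈ DS → F B.cons ∈ DS
  f_cons_and2 : ∀ A B : C1Formula, F (A.and B).cons ∈ DS → T B.cons ∈ DS → F A.cons ∈ DS
  f_cons_or1  : ∀ A B : C1Formula, F (A.or B).cons ∈ DS → T A.cons ∈ DS → F B.cons ∈ DS
  f_cons_or2  : ∀ A B : C1Formula, F (A.or B).cons ∈ DS → T B.cons ∈ DS → F A.cons ∈ DS
  f_cons_imp1 : ∀ A B : C1Formula, F (A.imp B).cons ∈ DS → T A.cons ∈ DS → F B.cons ∈ DS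
  f_cons_imp2 : ∀ A B : C1Formula, F (A.imp B).cons ∈ DS → T B.cons ∈ DS → F A.cons ∈ DS
  -- (iii) minor premiss or its conjugate present whenever the major premiss is
  t_imp1_minor : ∀ A B : C1Formula, T (A.imp B) ∈ DS → (T A ∈ DS ∨ F A ∈ DS)
  t_imp2_minor : ∀ A B : C1Formula, T (A.imp B) ∈ DS → (F B ∈ DS ∨ T B ∈ DS)
  f_and1_minor : ∀ A B : C1Formula, F (A.and B) ∈ DS → (T A ∈ DS ∨ F A ∈ DS)
  f_and2_minor : ∀ A B : C1Formula, F (A.and B) ∈ DS → (T B ∈ DS ∨ F B ∈ DS)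
  t_or1_minor  : ∀ A B : C1Formula, T (A.or B) ∈ DS → (F A ∈ DS ∨ T A ∈ DS)
  t_or2_minor  : ∀ A B : C1Formula, T (A.or B) ∈ DS → (F B ∈ DS ∨ T B ∈ DS)
  t_neg_minor  : ∀ A : C1Formula, T A.neg ∈ DS → (T A.cons ∈ DS ∨ F A.cons ∈ DS)
  f_cons_and1_minor : ∀ A B : C1Formula, F (A.and B).cons ∈ DS → (T A.cons ∈ DS ∨ F A.cons ∈ DS)
  f_cons_and2_minor : ∀ A B : C1Formula, F (A.and B).cons ∈ DS → (T B.cons ∈ DS ∨ F B.cons ∈ DS)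
  f_cons_or1_minor  : ∀ A B : C1Formula, F (A.or B).cons ∈ DS → (T A.cons ∈ DS ∨ F A.cons ∈ DS)
  f_cons_or2_minor  : ∀ A B : C1Formula, F (A.or B).cons ∈ DS → (T B.cons ∈ DS ∨ F B.cons ∈ DS)
  f_cons_imp1_minor : ∀ A B : C1Formula, F (A.imp B).cons ∈ DS → (T A.cons ∈ DS ∨ F A.cons ∈ DS)
  f_cons_imp2_minor : ∀ A B : C1Formula, F (A.imp B).cons ∈ DS → (T B.cons ∈ DS ∨ F B.cons ∈ DS)

/-!
The canonical valuation makes a formula true according to its classical truth conditions,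
except that a negation `¬A` is true whenever `A` is false *or* `T ¬A ∈ DS`. Downward
saturation shows by induction that every member of `DS` comes out true. The C1 clauses for
`¬¬A` and `∘A` then follow from the rules `T ¬¬A ⟹ T A` and `T ¬A, T ∘A ⟹ F A`; for
`∘(A ⊘ B)`, a false `∘(A ⊘ B)` forces `F ∘(A ⊘ B) ∈ DS` (via branching on the minor premiss
`∘(A ⊘ B)` of `T ¬(A ⊘ B)`), and the rules for `F ∘(A ⊘ B)` then put `F ∘A` or `F ∘B` in `DS`.
-/

def CanonicalTruth (DS : Set SignedFormula) : C1Formula → Prop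
  | .atom n => F (.atom n) ∉ DS
  | .neg A => ¬CanonicalTruth DS A ∨ T A.neg ∈ DS
  | .and A B => CanonicalTruth DS A ∧ CanonicalTruth DS B
  | .or A B => CanonicalTruth DS A ∨ CanonicalTruth DS B
  | .imp A B => CanonicalTruth DS A → CanonicalTruth DS B

namespace DownwardSaturated

variable {DS : Set SignedFormula} (h : DownwardSaturated DS)
include h

theorem canonicalTruth_of_mem (A : C1Formula) :
    (T A ∈ DS → CanonicalTruth DS A) ∧ (F A ∈ DS → ¬CanonicalTruth DS A) := by
  induction A with
  | atom n => exact ⟨h.no_conj _, fun hF hnF => hnF hF⟩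
  | neg A ih =>
    refine ⟨Or.inr, fun hF => ?_⟩
    rintro (hA | hT)
    · exact hA (ih.1 (h.f_neg A hF))
    · exact h.no_conj _ hF hT
  | and A B ihA ihB =>
    refine ⟨fun hT => ?_, fun hF ⟨hA, hB⟩ => ?_⟩
    · obtain ⟨hTA, hTB⟩ := h.t_and A B hT
      exact ⟨ihA.1 hTA, ihB.1 hTB⟩
    · rcases h.f_and1_minor A B hF with hTA | hFA
      · exact ihB.2 (h.f_and1 A B hF hTA) hB
      · exact ihA.2 hFA hA
  | or A B ihA ihB =>
    refine ⟨fun hT => ?_, fun hF => ?_⟩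
    · rcases h.t_or1_minor A B hT with hFA | hTA
      · exact Or.inr (ihB.1 (h.t_or1 A B hT hFA))
      · exact Or.inl (ihA.1 hTA)
    · obtain ⟨hFA, hFB⟩ := h.f_or A B hF
      rintro (hA | hB)
      exacts [ihA.2 hFA hA, ihB.2 hFB hB]
  | imp A B ihA ihB =>
    refine ⟨fun hT hA => ?_, fun hF hAB => ?_⟩
    · rcases h.t_imp1_minor A B hT with hTA | hFA
      · exact ihB.1 (h.t_imp1 A B hT hTA)
      · exact absurd hA (ihA.2 hFA)
    · obtain ⟨hTA, hFB⟩ := h.f_imp A B hF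
      exact ihB.2 hFB (hAB (ihA.1 hTA))

theorem canonicalTruth_of_neg_neg {A : C1Formula} (hA : CanonicalTruth DS A.neg.neg) :
    CanonicalTruth DS A := by
  rcases hA with hnA | hT
  · by_contra hA
    exact hnA (Or.inl hA)
  · exact (h.canonicalTruth_of_mem A).1 (h.t_negneg A hT)

theorem not_canonicalTruth_of_cons {A : C1Formula} (hA : CanonicalTruth DS A.cons) :
    ¬CanonicalTruth DS A ∨ ¬CanonicalTruth DS A.neg := by
  by_contra! ⟨hA1, hnA | hTnA⟩
  · exact absurd hA1 hnA
  rcases hA with hAnA | hTc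
  · exact hAnA ⟨hA1, Or.inr hTnA⟩
  · exact (h.canonicalTruth_of_mem A).2 (h.t_neg A hTnA hTc) hA1

theorem mem_F_cons_of_not_canonicalTruth {A : C1Formula} (hA : ¬CanonicalTruth DS A.cons) :
    F A.cons ∈ DS := by
  obtain ⟨hAnA, hTc⟩ := not_or.mp hA
  obtain ⟨hA1, hnA | hTnA⟩ := not_not.mp hAnA
  · exact absurd hA1 hnA
  rcases h.t_neg_minor A hTnA with hTc' | hFc
  exacts [absurd hTc' hTc, hFc]

/-- The shape shared by the three rule pairs for `F ∘(A ⊘ B)`, with `X = A ⊘ B`. -/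
theorem not_canonicalTruth_cons_of_rules {X A B : C1Formula}
    (minor : F X.cons ∈ DS → T A.cons ∈ DS ∨ F A.cons ∈ DS)
    (rule : F X.cons ∈ DS → T A.cons ∈ DS → F B.cons ∈ DS)
    (hX : ¬CanonicalTruth DS X.cons) :
    ¬CanonicalTruth DS A.cons ∨ ¬CanonicalTruth DS B.cons := by
  have hFX := h.mem_F_cons_of_not_canonicalTruth hX
  rcases minor hFX with hTA | hFA
  · exact Or.inr ((h.canonicalTruth_of_mem _).2 (rule hFX hTA))
  · exact Or.inl ((h.canonicalTruth_of_mem _).2 hFA)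

end DownwardSaturated

open scoped Classical in
noncomputable def canonicalVal (DS : Set SignedFormula) (A : C1Formula) : Fin 2 :=
  if CanonicalTruth DS A then 1 else 0

theorem canonicalVal_eq_one_iff {DS : Set SignedFormula} {A : C1Formula} :
    canonicalVal DS A = 1 ↔ CanonicalTruth DS A := by
  unfold canonicalVal; split_ifs <;> simp_all

theorem canonicalVal_eq_zero_iff {DS : Set SignedFormula} {A : C1Formula} :
    canonicalVal DS A = 0 ↔ ¬CanonicalTruth DS A := by
  unfold canonicalVal; split_ifs <;> simp_all

noncomputable def DownwardSaturated.canonicalValuation {DS : Set SignedFormula}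
    (h : DownwardSaturated DS) : C1Valuation where
  v := canonicalVal DS
  and_iff _ _ := by simp only [canonicalVal_eq_one_iff, CanonicalTruth]
  or_iff _ _ := by simp only [canonicalVal_eq_one_iff, CanonicalTruth]
  imp_iff _ _ := by simp only [canonicalVal_eq_one_iff, canonicalVal_eq_zero_iff, CanonicalTruth, imp_iff_not_or]
  neg_val _ := by
    simp only [canonicalVal_eq_one_iff, canonicalVal_eq_zero_iff, CanonicalTruth]
    exact fun hA => not_not.mp (not_or.mp hA).1
  negneg_val _ := by
    simp only [canonicalVal_eq_one_iff]
    exact h.canonicalTruth_of_neg_neg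
  cons_val _ := by
    simp only [canonicalVal_eq_one_iff, canonicalVal_eq_zero_iff]
    exact h.not_canonicalTruth_of_cons
  cons_and A B := by
    simp only [canonicalVal_eq_zero_iff]
    exact h.not_canonicalTruth_cons_of_rules (h.f_cons_and1_minor A B) (h.f_cons_and1 A B)
  cons_or A B := by
    simp only [canonicalVal_eq_zero_iff]
    exact h.not_canonicalTruth_cons_of_rules (h.f_cons_or1_minor A B) (h.f_cons_or1 A B)
  cons_imp A B := by
    simp only [canonicalVal_eq_zero_iff]
    exact h.not_canonicalTruth_cons_of_rules (h.f_cons_imp1_minor A B) (h.f_cons_imp1 A B)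

/-- Hintikka's Lemma for C1: every C1 downward saturated set of signed
formulas is satisfiable. -/
theorem c1_hintikka_lemma (DS : Set SignedFormula) (h : DownwardSaturated DS) :
    SatSet DS := by
  refine ⟨h.canonicalValuation, fun sf hsf => ?_⟩
  cases sf with
  | T A => exact canonicalVal_eq_one_iff.mpr ((h.canonicalTruth_of_mem A).1 hsf)
  | F A =>
    show 1 - canonicalVal DS A = 1
    rw [canonicalVal_eq_zero_iff.mpr ((h.canonicalTruth_of_mem A).2 hsf)]
    rfl
end

section
/- A set DS' of signed formulas of C1 is unsatisfiable if and only if there is no C1 downward saturated set DS'' such that DS' ⊆ DS''. -/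
open SignedFormula

/-!
A C1-valuation makes true a downward saturated set of signed formulas: each linear KE rule is
sound and each minor-premiss clause is bivalence. Conversely, a downward saturated set `DS` is
satisfied by its canonical valuation: an atom `p` is true iff `T p ∈ DS`, a negation `¬A` is true
iff `A` is false or `T ¬A ∈ DS`, and the binary connectives are truth-functional. The only
delicate clause is the propagation of consistency: if `∘(A ⊘ B)` is false then `A ⊘ B` and
`¬(A ⊘ B)` are both true, so `T ¬(A ⊘ B) ∈ DS`; saturation then puts `F ∘(A ⊘ B)` in `DS`, and the
`F∘` rules pass the falsity on to `∘A` or `∘B`.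
-/

theorem Fin.two_eq_zero_iff_ne_one (i : Fin 2) : i = 0 ↔ i ≠ 1 := by
  fin_cases i <;> decide

@[simp]
theorem Fin.ite_one_zero_eq_one_iff (p : Prop) [Decidable p] :
    (if p then (1 : Fin 2) else 0) = 1 ↔ p := by
  split_ifs <;> simp_all

@[simp]
theorem Fin.ite_one_zero_eq_zero_iff (p : Prop) [Decidable p] :
    (if p then (1 : Fin 2) else 0) = 0 ↔ ¬ p := by
  split_ifs <;> simp_all

namespace C1Valuation

variable (w : C1Valuation)

def truthSet : Set SignedFormula := {sf | w.sv sf = 1}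

variable {w}

@[simp]
theorem T_mem_truthSet {A : C1Formula} : T A ∈ w.truthSet ↔ w.v A = 1 := Iff.rfl

@[simp]
theorem F_mem_truthSet {A : C1Formula} : F A ∈ w.truthSet ↔ w.v A ≠ 1 := by
  change 1 - w.v A = 1 ↔ _
  generalize w.v A = x
  fin_cases x <;> decide

theorem conj_mem_truthSet_iff {sf : SignedFormula} :
    sf.conj ∈ w.truthSet ↔ sf ∉ w.truthSet := by
  cases sf <;> simp [conj]

variable (w)

theorem downwardSaturated_truthSet : DownwardSaturated w.truthSet := by
  constructor
  case no_conj => exact fun _ hsf hconj => conj_mem_truthSet_iff.mp hconj hsf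
  all_goals
    have := w.and_iff; have := w.or_iff; have := w.imp_iff
    have := w.neg_val; have := w.negneg_val; have := w.cons_val
    have := w.cons_and; have := w.cons_or; have := w.cons_imp
    simp only [T_mem_truthSet, F_mem_truthSet, Fin.two_eq_zero_iff_ne_one] at *
    grind

end C1Valuation

def CanonicalHolds (DS : Set SignedFormula) : C1Formula → Prop
  | .atom n => T (.atom n) ∈ DS
  | .neg A => ¬ CanonicalHolds DS A ∨ T A.neg ∈ DS
  | .and A B => CanonicalHolds DS A ∧ CanonicalHolds DS B
  | .or A B => CanonicalHolds DS A ∨ CanonicalHolds DS B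
  | .imp A B => CanonicalHolds DS A → CanonicalHolds DS B

theorem canonicalHolds_of_not_canonicalHolds_neg {DS : Set SignedFormula} {A : C1Formula}
    (h : ¬ CanonicalHolds DS A.neg) : CanonicalHolds DS A :=
  not_not.mp (mt Or.inl h)

namespace DownwardSaturated

variable {DS : Set SignedFormula} (hDS : DownwardSaturated DS)
include hDS

theorem T_notMem_of_F_mem {A : C1Formula} (h : F A ∈ DS) : T A ∉ DS :=
  hDS.no_conj _ h

theorem canonicalHolds_of_mem (A : C1Formula) :
    (T A ∈ DS → CanonicalHolds DS A) ∧ (F A ∈ DS → ¬ CanonicalHolds DS A) := by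
  induction A with
  | atom n => exact ⟨id, hDS.T_notMem_of_F_mem⟩
  | neg A ih =>
    refine ⟨Or.inr, fun hF => ?_⟩
    simp only [CanonicalHolds, not_or, not_not]
    exact ⟨ih.1 (hDS.f_neg A hF), hDS.T_notMem_of_F_mem hF⟩
  | and A B ihA ihB =>
    refine ⟨fun hT => ⟨ihA.1 (hDS.t_and A B hT).1, ihB.1 (hDS.t_and A B hT).2⟩,
      fun hF ⟨hA, hB⟩ => ?_⟩
    rcases hDS.f_and1_minor A B hF with hTA | hFA
    · exact ihB.2 (hDS.f_and1 A B hF hTA) hB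
    · exact ihA.2 hFA hA
  | or A B ihA ihB =>
    refine ⟨fun hT => ?_, fun hF => ?_⟩
    · rcases hDS.t_or1_minor A B hT with hFA | hTA
      · exact Or.inr (ihB.1 (hDS.t_or1 A B hT hFA))
      · exact Or.inl (ihA.1 hTA)
    · rintro (hA | hB)
      · exact ihA.2 (hDS.f_or A B hF).1 hA
      · exact ihB.2 (hDS.f_or A B hF).2 hB
  | imp A B ihA ihB =>
    refine ⟨fun hT hA => ?_, fun hF hAB => ?_⟩
    · rcases hDS.t_imp1_minor A B hT with hTA | hFA
      · exact ihB.1 (hDS.t_imp1 A B hT hTA)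
      · exact absurd hA (ihA.2 hFA)
    · exact ihB.2 (hDS.f_imp A B hF).2 (hAB (ihA.1 (hDS.f_imp A B hF).1))

theorem canonicalHolds_of_T_mem {A : C1Formula} (h : T A ∈ DS) : CanonicalHolds DS A :=
  (hDS.canonicalHolds_of_mem A).1 h

theorem not_canonicalHolds_of_F_mem {A : C1Formula} (h : F A ∈ DS) : ¬ CanonicalHolds DS A :=
  (hDS.canonicalHolds_of_mem A).2 h

theorem canonicalHolds_of_canonicalHolds_neg_neg {A : C1Formula}
    (h : CanonicalHolds DS A.neg.neg) : CanonicalHolds DS A := by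
  rcases h with hA | hT
  · exact canonicalHolds_of_not_canonicalHolds_neg hA
  · exact hDS.canonicalHolds_of_T_mem (hDS.t_negneg A hT)

theorem not_canonicalHolds_cons {A : C1Formula} (hA : CanonicalHolds DS A)
    (hnA : CanonicalHolds DS A.neg) : ¬ CanonicalHolds DS A.cons := by
  have hTneg : T A.neg ∈ DS := hnA.resolve_left (not_not.mpr hA)
  rintro (hc | hTc)
  · exact hc ⟨hA, hnA⟩
  · exact hDS.not_canonicalHolds_of_F_mem (hDS.t_neg A hTneg hTc) hA

theorem F_cons_mem_of_not_canonicalHolds {A : C1Formula} (h : ¬ CanonicalHolds DS A.cons) :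
    F A.cons ∈ DS := by
  simp only [C1Formula.cons, CanonicalHolds, not_or, not_not] at h
  obtain ⟨⟨hA, hnA⟩, hTc⟩ := h
  have hTneg : T A.neg ∈ DS := hnA.resolve_left (not_not.mpr hA)
  exact (hDS.t_neg_minor A hTneg).resolve_left hTc

theorem not_canonicalHolds_cons_or {C A B : C1Formula} (hC : ¬ CanonicalHolds DS C.cons)
    (minor : F C.cons ∈ DS → T A.cons ∈ DS ∨ F A.cons ∈ DS)
    (rule : F C.cons ∈ DS → T A.cons ∈ DS → F B.cons ∈ DS) :
    ¬ CanonicalHolds DS A.cons ∨ ¬ CanonicalHolds DS B.cons := by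
  have hFC := hDS.F_cons_mem_of_not_canonicalHolds hC
  rcases minor hFC with hTA | hFA
  · exact Or.inr (hDS.not_canonicalHolds_of_F_mem (rule hFC hTA))
  · exact Or.inl (hDS.not_canonicalHolds_of_F_mem hFA)

open Classical in
noncomputable def canonicalValuation_s2 : C1Valuation where
  v A := if CanonicalHolds DS A then 1 else 0
  and_iff A B := by simp only [Fin.ite_one_zero_eq_one_iff]; rfl
  or_iff A B := by simp only [Fin.ite_one_zero_eq_one_iff]; rfl
  imp_iff A B := by
    simp only [Fin.ite_one_zero_eq_one_iff, Fin.ite_one_zero_eq_zero_iff]; exact imp_iff_not_or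
  neg_val A := by
    simp only [Fin.ite_one_zero_eq_one_iff, Fin.ite_one_zero_eq_zero_iff]
    exact canonicalHolds_of_not_canonicalHolds_neg
  negneg_val A := by simpa using hDS.canonicalHolds_of_canonicalHolds_neg_neg
  cons_val A := by
    simpa [← not_and_or] using fun hc hA hnA => hDS.not_canonicalHolds_cons hA hnA hc
  cons_and A B := by
    simpa using fun h =>
      hDS.not_canonicalHolds_cons_or h (hDS.f_cons_and1_minor A B) (hDS.f_cons_and1 A B)
  cons_or A B := by
    simpa using fun h =>
      hDS.not_canonicalHolds_cons_or h (hDS.f_cons_or1_minor A B) (hDS.f_cons_or1 A B)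
  cons_imp A B := by
    simpa using fun h =>
      hDS.not_canonicalHolds_cons_or h (hDS.f_cons_imp1_minor A B) (hDS.f_cons_imp1 A B)

theorem subset_truthSet_canonicalValuation : DS ⊆ hDS.canonicalValuation_s2.truthSet := by
  rintro (A | A) h
  · simpa [canonicalValuation_s2] using hDS.canonicalHolds_of_T_mem h
  · simpa [canonicalValuation_s2] using hDS.not_canonicalHolds_of_F_mem h

end DownwardSaturated

theorem satSet_iff_exists_downwardSaturated_superset (S : Set SignedFormula) :
    SatSet S ↔ ∃ DS, DownwardSaturated DS ∧ S ⊆ DS :=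
  ⟨fun ⟨w, hw⟩ => ⟨w.truthSet, w.downwardSaturated_truthSet, hw⟩,
    fun ⟨_, hDS, hS⟩ =>
      ⟨hDS.canonicalValuation_s2, hS.trans hDS.subset_truthSet_canonicalValuation⟩⟩

/-- A set DS' of signed formulas of C1 is unsatisfiable iff there is no
C1 downward saturated set DS'' with DS' ⊆ DS''. -/
theorem c1_unsat_iff_no_downward_saturated_superset (DS' : Set SignedFormula) :
    ¬ SatSet DS' ↔ ¬ ∃ DS'' : Set SignedFormula, DownwardSaturated DS'' ∧ DS' ⊆ DS'' :=
  (satSet_iff_exists_downwardSaturated_superset DS').not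
end

section
/- (Soundness of the C1 KE system) For any set of formulas Γ and formula B of C1, if there is a closed C1 KE tableau for the sequent Γ ⊢ B, then Γ ⊨_{C1} B, i.e., every C1-valuation that assigns 1 to all formulas of Γ assigns 1 to B. -/
open SignedFormula

/-- `KEClosed S` holds iff there is a closed C1 KE tableau whose root branch
consists of the signed formulas in `S`.  A branch is identified with the set of
signed formulas occurring on it; linear rules add their conclusions to the
branch, the 0-premiss rule PB splits the branch in two, and a branch containing
both T A and F A is closed. -/
inductive KEClosed : Set SignedFormula → Prop where
  | close (S : Set SignedFormula) (A : C1Formula)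
      (hT : T A ∈ S) (hF : F A ∈ S) : KEClosed S
  | t_imp1 (S : Set SignedFormula) (A B : C1Formula)
      (h : T (A.imp B) ∈ S) (h' : T A ∈ S)
      (hc : KEClosed (insert (T B) S)) : KEClosed S
  | t_imp2 (S : Set SignedFormula) (A B : C1Formula)
      (h : T (A.imp B) ∈ S) (h' : F B ∈ S)
      (hc : KEClosed (insert (F A) S)) : KEClosed S
  | f_imp (S : Set SignedFormula) (A B : C1Formula)
      (h : F (A.imp B) ∈ S)
      (hc : KEClosed (insert (T A) (insert (F B) S))) : KEClosed S
  | t_and (S : Set SignedFormula) (A B : C1Formula)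
      (h : T (A.and B) ∈ S)
      (hc : KEClosed (insert (T A) (insert (T B) S))) : KEClosed S
  | f_and1 (S : Set SignedFormula) (A B : C1Formula)
      (h : F (A.and B) ∈ S) (h' : T A ∈ S)
      (hc : KEClosed (insert (F B) S)) : KEClosed S
  | f_and2 (S : Set SignedFormula) (A B : C1Formula)
      (h : F (A.and B) ∈ S) (h' : T B ∈ S)
      (hc : KEClosed (insert (F A) S)) : KEClosed S
  | t_or1 (S : Set SignedFormula) (A B : C1Formula)
      (h : T (A.or B) ∈ S) (h' : F A ∈ S)
      (hc : KEClosed (insert (T B) S)) : KEClosed S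
  | t_or2 (S : Set SignedFormula) (A B : C1Formula)
      (h : T (A.or B) ∈ S) (h' : F B ∈ S)
      (hc : KEClosed (insert (T A) S)) : KEClosed S
  | f_or (S : Set SignedFormula) (A B : C1Formula)
      (h : F (A.or B) ∈ S)
      (hc : KEClosed (insert (F A) (insert (F B) S))) : KEClosed S
  | f_neg (S : Set SignedFormula) (A : C1Formula)
      (h : F A.neg ∈ S)
      (hc : KEClosed (insert (T A) S)) : KEClosed S
  | t_negneg (S : Set SignedFormula) (A : C1Formula)
      (h : T A.neg.neg ∈ S)
      (hc : KEClosed (insert (T A) S)) : KEClosed S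
  | t_neg (S : Set SignedFormula) (A : C1Formula)
      (h : T A.neg ∈ S) (h' : T A.cons ∈ S)
      (hc : KEClosed (insert (F A) S)) : KEClosed S
  | f_cons_and1 (S : Set SignedFormula) (A B : C1Formula)
      (h : F (A.and B).cons ∈ S) (h' : T A.cons ∈ S)
      (hc : KEClosed (insert (F B.cons) S)) : KEClosed S
  | f_cons_and2 (S : Set SignedFormula) (A B : C1Formula)
      (h : F (A.and B).cons ∈ S) (h' : T B.cons ∈ S)
      (hc : KEClosed (insert (F A.cons) S)) : KEClosed S
  | f_cons_or1 (S : Set SignedFormula) (A B : C1Formula)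
      (h : F (A.or B).cons ∈ S) (h' : T A.cons ∈ S)
      (hc : KEClosed (insert (F B.cons) S)) : KEClosed S
  | f_cons_or2 (S : Set SignedFormula) (A B : C1Formula)
      (h : F (A.or B).cons ∈ S) (h' : T B.cons ∈ S)
      (hc : KEClosed (insert (F A.cons) S)) : KEClosed S
  | f_cons_imp1 (S : Set SignedFormula) (A B : C1Formula)
      (h : F (A.imp B).cons ∈ S) (h' : T A.cons ∈ S)
      (hc : KEClosed (insert (F B.cons) S)) : KEClosed S
  | f_cons_imp2 (S : Set SignedFormula) (A B : C1Formula)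
      (h : F (A.imp B).cons ∈ S) (h' : T B.cons ∈ S)
      (hc : KEClosed (insert (F A.cons) S)) : KEClosed S
  | pb (S : Set SignedFormula) (A : C1Formula)
      (h1 : KEClosed (insert (T A) S))
      (h2 : KEClosed (insert (F A) S)) : KEClosed S

/-- The initial branch of a C1 KE tableau for the sequent Γ ⊢ B:
it contains T A for each A ∈ Γ, together with F B. -/
def initialBranch (Γ : Set C1Formula) (B : C1Formula) : Set SignedFormula :=
  (SignedFormula.T '' Γ) ∪ {F B}

/-- There is a closed C1 KE tableau for the sequent Γ ⊢ B. -/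
def KEProvable (Γ : Set C1Formula) (B : C1Formula) : Prop :=
  KEClosed (initialBranch Γ B)

/-! Every KE rule is sound for C1-valuations: a valuation satisfying its premisses satisfies all
its conclusions, and one of the two branches opened by PB. Hence no valuation satisfies the root
branch of a closed tableau, while a valuation with `v(A) = 1` for `A ∈ Γ` and `v(B) = 0` would
satisfy the root branch of a tableau for `Γ ⊢ B`. -/

namespace C1Valuation

variable (w : C1Valuation) {A B : C1Formula}

/-- `w.sv sf = 1` as a proposition in which `F A` reads `w.v A ≠ 1`. -/
def Holds : SignedFormula → Prop
  | T A => w.v A = 1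
  | F A => w.v A ≠ 1

lemma imp_eq_one : w.v (A.imp B) = 1 ↔ (w.v A = 1 → w.v B = 1) := by
  have := w.imp_iff A B
  omega

lemma eq_one_of_neg_ne_one (h : w.v A.neg ≠ 1) : w.v A = 1 := by
  have := w.neg_val A
  omega

lemma ne_one_of_cons_eq_one (hc : w.v A.cons = 1) (hn : w.v A.neg = 1) : w.v A ≠ 1 := by
  have := w.cons_val A hc
  omega

lemma cons_and_eq_one (hA : w.v A.cons = 1) (hB : w.v B.cons = 1) :
    w.v (A.and B).cons = 1 := by
  have := w.cons_and A B
  omega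

lemma cons_or_eq_one (hA : w.v A.cons = 1) (hB : w.v B.cons = 1) :
    w.v (A.or B).cons = 1 := by
  have := w.cons_or A B
  omega

lemma cons_imp_eq_one (hA : w.v A.cons = 1) (hB : w.v B.cons = 1) :
    w.v (A.imp B).cons = 1 := by
  have := w.cons_imp A B
  omega

end C1Valuation

open C1Valuation Set

lemma Not.of_insert {α : Type*} {P : α → Prop} {s : Set α} {a : α}
    (h : ¬ ∀ x ∈ insert a s, P x) (ha : (∀ x ∈ s, P x) → P a) : ¬ ∀ x ∈ s, P x :=
  fun hs => h (forall_insert_of_forall hs (ha hs))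

theorem KEClosed.not_forall_holds {S : Set SignedFormula} (h : KEClosed S) (w : C1Valuation) :
    ¬ ∀ sf ∈ S, w.Holds sf := by
  induction h with
  | close S A hT hF => exact fun hw => hw _ hF (hw _ hT)
  | t_imp1 S A B h h' _ ih =>
    exact ih.of_insert fun hw => w.imp_eq_one.1 (hw _ h) (hw _ h')
  | t_imp2 S A B h h' _ ih =>
    exact ih.of_insert fun hw => mt (w.imp_eq_one.1 (hw _ h)) (hw _ h')
  | f_imp S A B h _ ih =>
    refine fun hw => ih ?_
    obtain ⟨hA, hB⟩ := Classical.not_imp.1 (mt w.imp_eq_one.2 (hw _ h))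
    exact forall_insert_of_forall (forall_insert_of_forall hw hB) hA
  | t_and S A B h _ ih =>
    refine fun hw => ih ?_
    obtain ⟨hA, hB⟩ := (w.and_iff A B).1 (hw _ h)
    exact forall_insert_of_forall (forall_insert_of_forall hw hB) hA
  | f_and1 S A B h h' _ ih =>
    exact ih.of_insert fun hw hB => hw _ h ((w.and_iff A B).2 ⟨hw _ h', hB⟩)
  | f_and2 S A B h h' _ ih =>
    exact ih.of_insert fun hw hA => hw _ h ((w.and_iff A B).2 ⟨hA, hw _ h'⟩)
  | t_or1 S A B h h' _ ih =>
    exact ih.of_insert fun hw => ((w.or_iff A B).1 (hw _ h)).resolve_left (hw _ h')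
  | t_or2 S A B h h' _ ih =>
    exact ih.of_insert fun hw => ((w.or_iff A B).1 (hw _ h)).resolve_right (hw _ h')
  | f_or S A B h _ ih =>
    refine fun hw => ih ?_
    obtain ⟨hA, hB⟩ := not_or.1 (mt (w.or_iff A B).2 (hw _ h))
    exact forall_insert_of_forall (forall_insert_of_forall hw hB) hA
  | f_neg S A h _ ih =>
    exact ih.of_insert fun hw => w.eq_one_of_neg_ne_one (hw _ h)
  | t_negneg S A h _ ih =>
    exact ih.of_insert fun hw => w.negneg_val A (hw _ h)
  | t_neg S A h h' _ ih =>
    exact ih.of_insert fun hw => w.ne_one_of_cons_eq_one (hw _ h') (hw _ h)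
  | f_cons_and1 S A B h h' _ ih =>
    exact ih.of_insert fun hw hB => hw _ h (w.cons_and_eq_one (hw _ h') hB)
  | f_cons_and2 S A B h h' _ ih =>
    exact ih.of_insert fun hw hA => hw _ h (w.cons_and_eq_one hA (hw _ h'))
  | f_cons_or1 S A B h h' _ ih =>
    exact ih.of_insert fun hw hB => hw _ h (w.cons_or_eq_one (hw _ h') hB)
  | f_cons_or2 S A B h h' _ ih =>
    exact ih.of_insert fun hw hA => hw _ h (w.cons_or_eq_one hA (hw _ h'))
  | f_cons_imp1 S A B h h' _ ih =>
    exact ih.of_insert fun hw hB => hw _ h (w.cons_imp_eq_one (hw _ h') hB)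
  | f_cons_imp2 S A B h h' _ ih =>
    exact ih.of_insert fun hw hA => hw _ h (w.cons_imp_eq_one hA (hw _ h'))
  | pb S A _ _ ih₁ ih₂ =>
    intro hw
    by_cases hA : w.v A = 1
    · exact ih₁ (forall_insert_of_forall hw hA)
    · exact ih₂ (forall_insert_of_forall hw hA)

lemma C1Valuation.forall_holds_initialBranch {w : C1Valuation} {Γ : Set C1Formula}
    {B : C1Formula} (hΓ : ∀ A ∈ Γ, w.v A = 1) (hB : w.v B ≠ 1) : ∀ sf ∈ initialBranch Γ B, w.Holds sf := by
  rintro sf (⟨A, hA, rfl⟩ | rfl)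
  · exact hΓ A hA
  · exact hB

/-- Soundness of the C1 KE system: if there is a closed C1 KE tableau for
the sequent Γ ⊢ B, then Γ ⊨_{C1} B. -/
theorem c1_KE_soundness (Γ : Set C1Formula) (B : C1Formula)
    (h : KEProvable Γ B) : C1Valid Γ B := fun w hΓ =>
  by_contra fun hB => h.not_forall_holds w (forall_holds_initialBranch hΓ hB)
end

section
/- (Completeness of the C1 KE system) For any set of formulas Γ and formula B of C1, if Γ ⊨_{C1} B (every C1-valuation that assigns 1 to all formulas of Γ assigns 1 to B), then there is a closed C1 KE tableau for the sequent Γ ⊢ B. -/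
open SignedFormula

namespace C1Formula

def toNat : C1Formula → ℕ
  | atom n => Nat.pair 0 n
  | neg A => Nat.pair 1 A.toNat
  | and A B => Nat.pair 2 (Nat.pair A.toNat B.toNat)
  | or A B => Nat.pair 3 (Nat.pair A.toNat B.toNat)
  | imp A B => Nat.pair 4 (Nat.pair A.toNat B.toNat)

theorem toNat_injective : Function.Injective toNat := by
  intro A B h
  induction A generalizing B <;> cases B <;> simp only [toNat, Nat.pair_eq_pair] at h <;>
    grind

instance : Inhabited C1Formula := ⟨atom 0⟩

instance : Countable C1Formula := toNat_injective.countable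

end C1Formula

theorem C1Valuation.sv_F_eq_one_iff (w : C1Valuation) (A : C1Formula) :
    w.sv (F A) = 1 ↔ w.v A = 0 := by
  have key : ∀ x : Fin 2, 1 - x = 1 ↔ x = 0 := by decide
  exact key (w.v A)

theorem KEClosed.mono {S S' : Set SignedFormula} (h : KEClosed S) (hs : S ⊆ S') :
    KEClosed S' := by
  induction h generalizing S' with
  | close _ A hT hF => exact .close _ A (hs hT) (hs hF)
  | t_imp1 _ A B h h' _ ih => exact .t_imp1 _ A B (hs h) (hs h') (ih (by gcongr))
  | t_imp2 _ A B h h' _ ih => exact .t_imp2 _ A B (hs h) (hs h') (ih (by gcongr))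
  | f_imp _ A B h _ ih => exact .f_imp _ A B (hs h) (ih (by gcongr))
  | t_and _ A B h _ ih => exact .t_and _ A B (hs h) (ih (by gcongr))
  | f_and1 _ A B h h' _ ih => exact .f_and1 _ A B (hs h) (hs h') (ih (by gcongr))
  | f_and2 _ A B h h' _ ih => exact .f_and2 _ A B (hs h) (hs h') (ih (by gcongr))
  | t_or1 _ A B h h' _ ih => exact .t_or1 _ A B (hs h) (hs h') (ih (by gcongr))
  | t_or2 _ A B h h' _ ih => exact .t_or2 _ A B (hs h) (hs h') (ih (by gcongr))
  | f_or _ A B h _ ih => exact .f_or _ A B (hs h) (ih (by gcongr))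
  | f_neg _ A h _ ih => exact .f_neg _ A (hs h) (ih (by gcongr))
  | t_negneg _ A h _ ih => exact .t_negneg _ A (hs h) (ih (by gcongr))
  | t_neg _ A h h' _ ih => exact .t_neg _ A (hs h) (hs h') (ih (by gcongr))
  | f_cons_and1 _ A B h h' _ ih => exact .f_cons_and1 _ A B (hs h) (hs h') (ih (by gcongr))
  | f_cons_and2 _ A B h h' _ ih => exact .f_cons_and2 _ A B (hs h) (hs h') (ih (by gcongr))
  | f_cons_or1 _ A B h h' _ ih => exact .f_cons_or1 _ A B (hs h) (hs h') (ih (by gcongr))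
  | f_cons_or2 _ A B h h' _ ih => exact .f_cons_or2 _ A B (hs h) (hs h') (ih (by gcongr))
  | f_cons_imp1 _ A B h h' _ ih => exact .f_cons_imp1 _ A B (hs h) (hs h') (ih (by gcongr))
  | f_cons_imp2 _ A B h h' _ ih => exact .f_cons_imp2 _ A B (hs h) (hs h') (ih (by gcongr))
  | pb _ A _ _ ih₁ ih₂ => exact .pb _ A (ih₁ (by gcongr)) (ih₂ (by gcongr))

open Classical in
noncomputable def extendBranch (S : Set SignedFormula) (A : C1Formula) : Set SignedFormula :=
  if KEClosed (insert (T A) S) then insert (F A) S else insert (T A) S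

theorem subset_extendBranch (S : Set SignedFormula) (A : C1Formula) :
    S ⊆ extendBranch S A := by
  unfold extendBranch
  split_ifs <;> exact Set.subset_insert _ _

theorem T_mem_or_F_mem_extendBranch (S : Set SignedFormula) (A : C1Formula) :
    T A ∈ extendBranch S A ∨ F A ∈ extendBranch S A := by
  unfold extendBranch
  split_ifs
  · exact .inr (Set.mem_insert _ _)
  · exact .inl (Set.mem_insert _ _)

theorem not_closed_extendBranch {S : Set SignedFormula} (hS : ¬ KEClosed S) (A : C1Formula) :
    ¬ KEClosed (extendBranch S A) := by
  unfold extendBranch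
  split_ifs with hT
  · exact fun hF => hS (.pb S A hT hF)
  · exact hT

noncomputable def lindenbaumChain (a : ℕ → C1Formula) (S : Set SignedFormula) :
    ℕ → Set SignedFormula
  | 0 => S
  | n + 1 => extendBranch (lindenbaumChain a S n) (a n)

theorem lindenbaumChain_monotone (a : ℕ → C1Formula) (S : Set SignedFormula) :
    Monotone (lindenbaumChain a S) :=
  monotone_nat_of_le_succ fun n => subset_extendBranch _ (a n)

theorem not_closed_lindenbaumChain {S : Set SignedFormula} (hS : ¬ KEClosed S)
    (a : ℕ → C1Formula) (n : ℕ) : ¬ KEClosed (lindenbaumChain a S n) := by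
  induction n with
  | zero => exact hS
  | succ n ih => exact not_closed_extendBranch ih (a n)

open Classical in
noncomputable def truthValue (U : Set SignedFormula) (A : C1Formula) : Fin 2 :=
  if T A ∈ U then 1 else 0

theorem truthValue_eq_one_iff {U : Set SignedFormula} {A : C1Formula} :
    truthValue U A = 1 ↔ T A ∈ U := by
  simp [truthValue]

structure CompleteOpenBranch (U : Set SignedFormula) : Prop where
  complete : ∀ A : C1Formula, T A ∈ U ∨ F A ∈ U
  not_closed_of_finset : ∀ s : Finset SignedFormula, ↑s ⊆ U → ¬ KEClosed ↑s

theorem exists_completeOpenBranch {S : Set SignedFormula} (hS : ¬ KEClosed S) :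
    ∃ U, S ⊆ U ∧ CompleteOpenBranch U := by
  obtain ⟨a, ha⟩ := exists_surjective_nat C1Formula
  refine ⟨⋃ n, lindenbaumChain a S n, Set.subset_iUnion (lindenbaumChain a S) 0, ?_, ?_⟩
  · intro A
    obtain ⟨n, rfl⟩ := ha A
    exact (T_mem_or_F_mem_extendBranch _ (a n)).imp
      (Set.mem_iUnion_of_mem (n + 1)) (Set.mem_iUnion_of_mem (n + 1))
  · intro s hs hc
    obtain ⟨n, hn⟩ := (lindenbaumChain_monotone a S).directed_le
      |>.exists_mem_subset_of_finset_subset_biUnion hs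
    exact not_closed_lindenbaumChain hS a n (hc.mono hn)

namespace CompleteOpenBranch

variable {U : Set SignedFormula} (hU : CompleteOpenBranch U)
include hU

theorem T_mem_of_closed_insert_F {s : Finset SignedFormula} (hs : ↑s ⊆ U) {A : C1Formula}
    (hc : KEClosed (insert (F A) ↑s)) : T A ∈ U := by
  refine (hU.complete A).resolve_right fun hF => hU.not_closed_of_finset (insert (F A) s) ?_ ?_
  · simpa using Set.insert_subset hF hs
  · simpa using hc

theorem F_mem_of_closed_insert_T {s : Finset SignedFormula} (hs : ↑s ⊆ U) {A : C1Formula}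
    (hc : KEClosed (insert (T A) ↑s)) : F A ∈ U := by
  refine (hU.complete A).resolve_left fun hT => hU.not_closed_of_finset (insert (T A) s) ?_ ?_
  · simpa using Set.insert_subset hT hs
  · simpa using hc

theorem F_mem_iff (A : C1Formula) : F A ∈ U ↔ T A ∉ U := by
  refine ⟨fun hF hT => hU.not_closed_of_finset {T A, F A} ?_ (.close _ A ?_ ?_),
    (hU.complete A).resolve_left⟩ <;> simp [Set.insert_subset_iff, hT, hF]

theorem T_and_mem_iff (A B : C1Formula) : T (A.and B) ∈ U ↔ T A ∈ U ∧ T B ∈ U := by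
  constructor
  · intro h
    refine ⟨hU.T_mem_of_closed_insert_F (s := {T (A.and B)}) (by simpa using h) ?_,
      hU.T_mem_of_closed_insert_F (s := {T (A.and B)}) (by simpa using h) ?_⟩
    · exact .t_and _ A B (by simp) (.close _ A (by simp) (by simp))
    · exact .t_and _ A B (by simp) (.close _ B (by simp) (by simp))
  · rintro ⟨hA, hB⟩
    refine hU.T_mem_of_closed_insert_F (s := {T A, T B})
        (by simp [Set.insert_subset_iff, hA, hB]) ?_
    exact .f_and1 _ A B (by simp) (by simp) (.close _ B (by simp) (by simp))

theorem T_or_mem_iff (A B : C1Formula) : T (A.or B) ∈ U ↔ T A ∈ U ∨ T B ∈ U := by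
  constructor
  · intro h
    refine (hU.complete A).imp_right fun hA => ?_
    refine hU.T_mem_of_closed_insert_F (s := {T (A.or B), F A})
        (by simp [Set.insert_subset_iff, h, hA]) ?_
    exact .t_or1 _ A B (by simp) (by simp) (.close _ B (by simp) (by simp))
  · rintro (hA | hB)
    · refine hU.T_mem_of_closed_insert_F (s := {T A}) (by simpa using hA) ?_
      exact .f_or _ A B (by simp) (.close _ A (by simp) (by simp))
    · refine hU.T_mem_of_closed_insert_F (s := {T B}) (by simpa using hB) ?_
      exact .f_or _ A B (by simp) (.close _ B (by simp) (by simp))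

theorem T_imp_mem_iff (A B : C1Formula) : T (A.imp B) ∈ U ↔ F A ∈ U ∨ T B ∈ U := by
  constructor
  · intro h
    refine (hU.complete A).symm.imp_right fun hA => ?_
    refine hU.T_mem_of_closed_insert_F (s := {T (A.imp B), T A})
        (by simp [Set.insert_subset_iff, h, hA]) ?_
    exact .t_imp1 _ A B (by simp) (by simp) (.close _ B (by simp) (by simp))
  · rintro (hA | hB)
    · refine hU.T_mem_of_closed_insert_F (s := {F A}) (by simpa using hA) ?_
      exact .f_imp _ A B (by simp) (.close _ A (by simp) (by simp))
    · refine hU.T_mem_of_closed_insert_F (s := {T B}) (by simpa using hB) ?_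
      exact .f_imp _ A B (by simp) (.close _ B (by simp) (by simp))

theorem T_mem_of_F_neg_mem {A : C1Formula} (h : F A.neg ∈ U) : T A ∈ U :=
  hU.T_mem_of_closed_insert_F (s := {F A.neg}) (by simpa using h)
    (.f_neg _ A (by simp) (.close _ A (by simp) (by simp)))

theorem T_mem_of_T_neg_neg_mem {A : C1Formula} (h : T A.neg.neg ∈ U) : T A ∈ U :=
  hU.T_mem_of_closed_insert_F (s := {T A.neg.neg}) (by simpa using h)
    (.t_negneg _ A (by simp) (.close _ A (by simp) (by simp)))

theorem F_mem_of_T_cons_mem_of_T_neg_mem {A : C1Formula} (h : T A.cons ∈ U)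
    (hn : T A.neg ∈ U) : F A ∈ U :=
  hU.F_mem_of_closed_insert_T (s := {T A.neg, T A.cons}) (by simp [Set.insert_subset_iff, h, hn])
    (.t_neg _ A (by simp) (by simp) (.close _ A (by simp) (by simp)))

theorem F_cons_mem_of_F_cons_and_mem {A B : C1Formula} (h : F (A.and B).cons ∈ U)
    (hA : T A.cons ∈ U) : F B.cons ∈ U :=
  hU.F_mem_of_closed_insert_T (s := {F (A.and B).cons, T A.cons})
      (by simp [Set.insert_subset_iff, h, hA])
    (.f_cons_and1 _ A B (by simp) (by simp) (.close _ B.cons (by simp) (by simp)))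

theorem F_cons_mem_of_F_cons_or_mem {A B : C1Formula} (h : F (A.or B).cons ∈ U)
    (hA : T A.cons ∈ U) : F B.cons ∈ U :=
  hU.F_mem_of_closed_insert_T (s := {F (A.or B).cons, T A.cons})
      (by simp [Set.insert_subset_iff, h, hA])
    (.f_cons_or1 _ A B (by simp) (by simp) (.close _ B.cons (by simp) (by simp)))

theorem F_cons_mem_of_F_cons_imp_mem {A B : C1Formula} (h : F (A.imp B).cons ∈ U)
    (hA : T A.cons ∈ U) : F B.cons ∈ U :=
  hU.F_mem_of_closed_insert_T (s := {F (A.imp B).cons, T A.cons})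
      (by simp [Set.insert_subset_iff, h, hA])
    (.f_cons_imp1 _ A B (by simp) (by simp) (.close _ B.cons (by simp) (by simp)))

theorem truthValue_eq_zero_iff {A : C1Formula} : truthValue U A = 0 ↔ F A ∈ U := by
  simp [truthValue, hU.F_mem_iff]

noncomputable def valuation : C1Valuation where
  v := truthValue U
  and_iff A B := by simp only [truthValue_eq_one_iff]; exact hU.T_and_mem_iff A B
  or_iff A B := by simp only [truthValue_eq_one_iff]; exact hU.T_or_mem_iff A B
  imp_iff A B := by
    simp only [truthValue_eq_one_iff, hU.truthValue_eq_zero_iff]; exact hU.T_imp_mem_iff A B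
  neg_val A := by
    simp only [truthValue_eq_one_iff, hU.truthValue_eq_zero_iff]; exact hU.T_mem_of_F_neg_mem
  negneg_val A := by simp only [truthValue_eq_one_iff]; exact hU.T_mem_of_T_neg_neg_mem
  cons_val A h := by
    simp only [truthValue_eq_one_iff, hU.truthValue_eq_zero_iff] at h ⊢
    exact (hU.complete A.neg).imp_left (hU.F_mem_of_T_cons_mem_of_T_neg_mem h)
  cons_and A B h := by
    simp only [hU.truthValue_eq_zero_iff] at h ⊢
    exact (hU.complete A.cons).symm.imp_right (hU.F_cons_mem_of_F_cons_and_mem h)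
  cons_or A B h := by
    simp only [hU.truthValue_eq_zero_iff] at h ⊢
    exact (hU.complete A.cons).symm.imp_right (hU.F_cons_mem_of_F_cons_or_mem h)
  cons_imp A B h := by
    simp only [hU.truthValue_eq_zero_iff] at h ⊢
    exact (hU.complete A.cons).symm.imp_right (hU.F_cons_mem_of_F_cons_imp_mem h)

theorem sv_valuation_eq_one_iff (sf : SignedFormula) : hU.valuation.sv sf = 1 ↔ sf ∈ U := by
  cases sf with
  | T A => exact truthValue_eq_one_iff
  | F A => exact (hU.valuation.sv_F_eq_one_iff A).trans hU.truthValue_eq_zero_iff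

end CompleteOpenBranch

theorem satSet_of_not_closed {S : Set SignedFormula} (hS : ¬ KEClosed S) : SatSet S := by
  obtain ⟨U, hSU, hU⟩ := exists_completeOpenBranch hS
  exact ⟨hU.valuation, fun sf hsf => (hU.sv_valuation_eq_one_iff sf).2 (hSU hsf)⟩

/-- Completeness of the C1 KE system: if Γ ⊨_{C1} B, then there is a closed
C1 KE tableau for the sequent Γ ⊢ B. -/
theorem c1_KE_completeness (Γ : Set C1Formula) (B : C1Formula)
    (h : C1Valid Γ B) : KEProvable Γ B := by
  by_contra hB
  obtain ⟨w, hw⟩ := satSet_of_not_closed hB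
  have hΓ : ∀ A ∈ Γ, w.v A = 1 := fun A hA => hw (T A) (Or.inl ⟨A, hA, rfl⟩)
  have hFB : w.v B = 0 := (w.sv_F_eq_one_iff B).1 (hw (F B) (Or.inr rfl))
  exact absurd (h w hΓ) (by simp [hFB])
end

section
/- (Medical example, Case 4) Let K, L, M, N, O be distinct propositional atoms and let F1 = K → ¬L, F2 = L → ¬K, F3 = K → M, F4 = N → K, F5 = O → L. Then {F1, F2, F3, F4, F5, N, O} ⊨_{C1} K ∧ ¬∘K, where ∘K abbreviates ¬(K ∧ ¬K); i.e., every C1-valuation assigning 1 to F1, F2, F3, F4, F5, N and O assigns 1 to K ∧ ¬∘K. -/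
namespace C1Valuation

variable (w : C1Valuation) {A B : C1Formula}

theorem eq_one_of_imp (hAB : w.v (A.imp B) = 1) (hA : w.v A = 1) : w.v B = 1 :=
  ((w.imp_iff A B).1 hAB).resolve_left (by simp [hA])

theorem neg_eq_one_of_ne_one (hA : w.v A ≠ 1) : w.v A.neg = 1 := by
  by_contra hneg
  exact hA (w.neg_val A (by omega))

theorem cons_ne_one (hA : w.v A = 1) (hnA : w.v A.neg = 1) : w.v A.cons ≠ 1 := by
  intro hcons
  rcases w.cons_val A hcons with h | h <;> simp_all

theorem neg_cons_eq_one (hA : w.v A = 1) (hnA : w.v A.neg = 1) : w.v A.cons.neg = 1 :=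
  w.neg_eq_one_of_ne_one (w.cons_ne_one hA hnA)

end C1Valuation

theorem medical_case4_general (k l n o : ℕ)
    (w : C1Valuation)
    (hF2 : w.v ((C1Formula.atom l).imp (C1Formula.atom k).neg) = 1)
    (hF4 : w.v ((C1Formula.atom n).imp (C1Formula.atom k)) = 1)
    (hF5 : w.v ((C1Formula.atom o).imp (C1Formula.atom l)) = 1)
    (hN : w.v (C1Formula.atom n) = 1)
    (hO : w.v (C1Formula.atom o) = 1) :
    w.v ((C1Formula.atom k).and ((C1Formula.atom k).cons.neg)) = 1 := by
  have hK := w.eq_one_of_imp hF4 hN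
  have hnK := w.eq_one_of_imp hF2 (w.eq_one_of_imp hF5 hO)
  exact (w.and_iff _ _).2 ⟨hK, w.neg_cons_eq_one hK hnK⟩

/-- Medical example, Case 4: with F1 = K → ¬L, F2 = L → ¬K, F3 = K → M,
F4 = N → K, F5 = O → L for distinct atoms K, L, M, N, O, we have
{F1, F2, F3, F4, F5, N, O} ⊨_{C1} K ∧ ¬∘K, where ∘K = ¬(K ∧ ¬K). -/
theorem medical_case4 (k l m n o : ℕ) (hdist : [k, l, m, n, o].Pairwise (· ≠ ·))
    (w : C1Valuation)
    (hF1 : w.v ((C1Formula.atom k).imp (C1Formula.atom l).neg) = 1)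
    (hF2 : w.v ((C1Formula.atom l).imp (C1Formula.atom k).neg) = 1)
    (hF3 : w.v ((C1Formula.atom k).imp (C1Formula.atom m)) = 1)
    (hF4 : w.v ((C1Formula.atom n).imp (C1Formula.atom k)) = 1)
    (hF5 : w.v ((C1Formula.atom o).imp (C1Formula.atom l)) = 1)
    (hN : w.v (C1Formula.atom n) = 1)
    (hO : w.v (C1Formula.atom o) = 1) :
    w.v ((C1Formula.atom k).and ((C1Formula.atom k).cons.neg)) = 1 :=
  medical_case4_general k l n o w hF2 hF4 hF5 hN hO
end
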